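/- The point (-1:1:1:1:1) is a singular point (node) of the Burkhardt quartic B, i.e., all five partial derivatives of f = y0*(y0^3+y1^3+y2^3+y3^3+y4^3)+3*y1*y2*y3*y4 vanish there, and f itself vanishes; moreover in characteristic q with q ≡ 2 mod 3 its tangent cone quadric is non-split over F_q. -/

import Mathlib

open MvPolynomial

/-- The defining quartic of the Burkhardt quartic threefold `B ⊂ ℙ⁴`, over `ℤ`. -/
noncomputable def burkhardtPoly : MvPolynomial (Fin 5) ℤ :=
  X 0 * (X 0 ^ 3 + X 1 ^ 3 + X 2 ^ 3 + X 3 ^ 3 + X 4 ^ 3) + 3 * (X 1 * X 2 * X 3 * X 4)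

/-- The node `n = (-1:1:1:1:1)` (as an affine vector). -/
def nodePt : Fin 5 → ℤ := ![-1, 1, 1, 1, 1]

/-- The tangent cone quadric of `B` at the node: the degree-2 homogeneous component of
`f(n + u)` as a polynomial in `u`. -/
noncomputable def tangentConeQuadric : MvPolynomial (Fin 5) ℤ :=
  homogeneousComponent 2 (bind₁ (fun i => X i + C (nodePt i)) burkhardtPoly)

/-!
At the node `n` the expansion of `f (n + u)` starts in degree two with
`Q = 3 (A B - (C² - C D + D²))`, where `A = 2u₀ - u₁ + u₂ + u₃ + u₄`, `B = u₀ + u₁`,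
`C = u₂ - u₄`, `D = u₃ - u₄` have only the multiples of `n` as common zeros.
If `q ≡ 2 (mod 3)` then `𝔽_q` has no primitive cube root of unity, so `C² - C D + D²` is
anisotropic. A three-dimensional isotropic `W` would contain `x` with `A x = 0 ≠ B x` and `y` with
`B y = 0 ≠ A y`; isotropy forces `C` and `D` to vanish at both, and then
`Q (x + y) = 3 A(y) B(x) ≠ 0`.
-/

theorem burkhardtPoly_eval_nodePt : eval nodePt burkhardtPoly = 0 := by
  simp [burkhardtPoly, nodePt]

theorem burkhardtPoly_pderiv_eval_nodePt (i : Fin 5) :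
    eval nodePt (pderiv i burkhardtPoly) = 0 := by
  have hthree (j : Fin 5) : pderiv j (3 : MvPolynomial (Fin 5) ℤ) = 0 := by
    simpa using (pderiv j).map_natCast 3
  fin_cases i <;> simp [burkhardtPoly, nodePt, pderiv_X, hthree]

noncomputable def nodeQuadraticTerm : MvPolynomial (Fin 5) ℤ :=
  C 3 * ((C 2 * X 0 - X 1 + X 2 + X 3 + X 4) * (X 0 + X 1) -
    ((X 2 - X 4) ^ 2 - (X 2 - X 4) * (X 3 - X 4) + (X 3 - X 4) ^ 2))

noncomputable def nodeCubicTerm : MvPolynomial (Fin 5) ℤ :=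
  C 3 * X 0 * (X 1 ^ 2 + X 2 ^ 2 + X 3 ^ 2 + X 4 ^ 2) - (X 1 ^ 3 + X 2 ^ 3 + X 3 ^ 3 + X 4 ^ 3) +
    C 3 * (X 2 * X 3 * X 4 + X 1 * X 3 * X 4 + X 1 * X 2 * X 4 + X 1 * X 2 * X 3) - C 4 * X 0 ^ 3

theorem bind₁_burkhardtPoly_eq :
    bind₁ (fun i => X i + C (nodePt i)) burkhardtPoly =
      nodeQuadraticTerm + nodeCubicTerm + burkhardtPoly := by
  simp only [burkhardtPoly, nodeQuadraticTerm, nodeCubicTerm, nodePt, map_add, map_mul,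
    map_pow, bind₁_X_right, map_ofNat, Matrix.cons_val, map_neg, map_one]
  ring

theorem isHomogeneous_nodeQuadraticTerm : nodeQuadraticTerm.IsHomogeneous 2 := by
  have hX (i : Fin 5) : (X i : MvPolynomial (Fin 5) ℤ).IsHomogeneous 1 := isHomogeneous_X ℤ i
  have hA := (((((isHomogeneous_C_mul_X 2 0).sub (hX 1)).add (hX 2)).add (hX 3)).add (hX 4))
  have hC := (hX 2).sub (hX 4)
  have hD := (hX 3).sub (hX 4)
  exact ((hA.mul ((hX 0).add (hX 1))).sub (((hC.pow 2).sub (hC.mul hD)).add (hD.pow 2))).C_mul 3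

theorem isHomogeneous_nodeCubicTerm : nodeCubicTerm.IsHomogeneous 3 := by
  have hX (i : Fin 5) : (X i : MvPolynomial (Fin 5) ℤ).IsHomogeneous 1 := isHomogeneous_X ℤ i
  have hsq (i : Fin 5) := isHomogeneous_X_pow (R := ℤ) i 2
  have hcube (i : Fin 5) := isHomogeneous_X_pow (R := ℤ) i 3
  have hprod (i j k : Fin 5) := ((hX i).mul (hX j)).mul (hX k)
  have hmixed := ((((hprod 2 3 4).add (hprod 1 3 4)).add (hprod 1 2 4)).add (hprod 1 2 3)).C_mul 3
  exact ((((isHomogeneous_C_mul_X 3 0).mul ((((hsq 1).add (hsq 2)).add (hsq 3)).add (hsq 4))).sub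
    ((((hcube 1).add (hcube 2)).add (hcube 3)).add (hcube 4))).add hmixed).sub
    (isHomogeneous_C_mul_X_pow 4 0 3)

theorem isHomogeneous_burkhardtPoly : burkhardtPoly.IsHomogeneous 4 := by
  have hX (i : Fin 5) : (X i : MvPolynomial (Fin 5) ℤ).IsHomogeneous 1 := isHomogeneous_X ℤ i
  have hcube (i : Fin 5) := isHomogeneous_X_pow (R := ℤ) i 3
  rw [burkhardtPoly, ← map_ofNat C 3]
  exact ((hX 0).mul (((((hcube 0).add (hcube 1)).add (hcube 2)).add (hcube 3)).add (hcube 4))).add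
    (((((hX 1).mul (hX 2)).mul (hX 3)).mul (hX 4)).C_mul 3)

theorem tangentConeQuadric_eq : tangentConeQuadric = nodeQuadraticTerm := by
  rw [tangentConeQuadric, bind₁_burkhardtPoly_eq, map_add, map_add,
    homogeneousComponent_of_mem isHomogeneous_nodeQuadraticTerm,
    homogeneousComponent_of_mem isHomogeneous_nodeCubicTerm,
    homogeneousComponent_of_mem isHomogeneous_burkhardtPoly]
  norm_num

section FiniteField

variable {F : Type*} [Field F] [Fintype F]

theorem three_ne_zero_of_card_mod_three (h : Fintype.card F % 3 = 2) : (3 : F) ≠ 0 := by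
  intro h3
  have hcard := FiniteField.cast_card_eq_zero F
  rw [show Fintype.card F = 3 * (Fintype.card F / 3) + 2 by omega] at hcard
  push_cast at hcard
  rw [h3, zero_mul, zero_add] at hcard
  exact one_ne_zero (by linear_combination h3 - hcard : (1 : F) = 0)

theorem sq_add_add_one_ne_zero_of_card_mod_three (h : Fintype.card F % 3 = 2) (t : F) :
    t ^ 2 + t + 1 ≠ 0 := by
  intro ht
  have ht0 : t ≠ 0 := by rintro rfl; simp at ht
  have hcube : t ^ 3 = 1 := by linear_combination (t - 1) * ht
  have hcoprime : Nat.gcd 3 (Fintype.card F - 1) = 1 :=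
    (Nat.Prime.coprime_iff_not_dvd Nat.prime_three).mpr (by omega)
  have hone : t = 1 := by
    simpa [hcoprime] using pow_gcd_eq_one.mpr ⟨hcube, FiniteField.pow_card_sub_one_eq_one t ht0⟩
  subst hone
  exact three_ne_zero_of_card_mod_three h (by linear_combination ht)

end FiniteField

theorem sq_sub_mul_add_sq_eq_zero_iff {F : Type*} [Field F] (hF : ∀ t : F, t ^ 2 + t + 1 ≠ 0)
    (c d : F) : c ^ 2 - c * d + d ^ 2 = 0 ↔ c = 0 ∧ d = 0 := by
  refine ⟨fun h => ?_, by rintro ⟨rfl, rfl⟩; ring⟩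
  by_cases hd : d = 0
  · subst hd
    exact ⟨pow_eq_zero_iff two_ne_zero |>.mp (by linear_combination h), rfl⟩
  · refine absurd ?_ (hF (-(c / d)))
    field_simp
    linear_combination h

open Module

theorem Submodule.exists_mem_ne_zero_apply_eq_zero_of_finrank_lt {K V U : Type*} [Field K]
    [AddCommGroup V] [Module K V] [AddCommGroup U] [Module K U] [FiniteDimensional K U]
    (W : Submodule K V) (f : V →ₗ[K] U) (h : finrank K U < finrank K W) :
    ∃ w ∈ W, w ≠ 0 ∧ f w = 0 := by
  have : FiniteDimensional K W := Module.finite_of_finrank_pos (by omega)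
  obtain ⟨⟨w, hw⟩, hker, hne⟩ := Submodule.exists_mem_ne_zero_of_ne_bot
    (LinearMap.ker_ne_bot_of_finrank_lt (f := f ∘ₗ W.subtype) h)
  exact ⟨w, hw, by simpa using hne, hker⟩

section HyperbolicPlusAnisotropic

variable {K V : Type*} [Field K] [AddCommGroup V] [Module K V] {N : K → K → K}
  {W : Submodule K V}

theorem exists_mem_apply_ne_zero_of_isotropic (A B C D ℓ : V →ₗ[K] K)
    (hN : ∀ c d, N c d = 0 ↔ c = 0 ∧ d = 0)
    (hker : ∀ v, A v = 0 → B v = 0 → C v = 0 → D v = 0 → ℓ v = 0 → v = 0)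
    (hW : 2 < finrank K W) (hq : ∀ w ∈ W, A w * B w = N (C w) (D w)) :
    ∃ x ∈ W, A x = 0 ∧ C x = 0 ∧ D x = 0 ∧ B x ≠ 0 := by
  obtain ⟨x, hxW, hx0, hx⟩ := W.exists_mem_ne_zero_apply_eq_zero_of_finrank_lt (A.prod ℓ)
    (by simpa using hW)
  simp only [LinearMap.prod_apply, Function.prod_apply, Prod.mk_eq_zero] at hx
  have hCD := (hN _ _).mp (by rw [← hq x hxW, hx.1, zero_mul])
  exact ⟨x, hxW, hx.1, hCD.1, hCD.2, fun hB => hx0 (hker x hx.1 hB hCD.1 hCD.2 hx.2)⟩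

theorem finrank_le_two_of_isotropic (A B C D ℓ : V →ₗ[K] K)
    (hN : ∀ c d, N c d = 0 ↔ c = 0 ∧ d = 0)
    (hker : ∀ v, A v = 0 → B v = 0 → C v = 0 → D v = 0 → ℓ v = 0 → v = 0)
    (hq : ∀ w ∈ W, A w * B w = N (C w) (D w)) : finrank K W ≤ 2 := by
  by_contra! hW
  obtain ⟨x, hxW, hAx, hCx, hDx, hBx⟩ :=
    exists_mem_apply_ne_zero_of_isotropic A B C D ℓ hN hker hW hq
  obtain ⟨y, hyW, hBy, hCy, hDy, hAy⟩ := exists_mem_apply_ne_zero_of_isotropic B A C D ℓ hN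
    (fun v hB hA => hker v hA hB) hW (fun w hw => by rw [mul_comm, hq w hw])
  have hsum := hq (x + y) (W.add_mem hxW hyW)
  simp only [map_add, hAx, hBy, hCx, hCy, hDx, hDy, add_zero, zero_add] at hsum
  exact mul_ne_zero hAy hBx ((hN 0 0).mpr ⟨rfl, rfl⟩ ▸ hsum)

end HyperbolicPlusAnisotropic

namespace TangentCone

variable {F : Type*} [Field F]

abbrev coord (i : Fin 5) : (Fin 5 → F) →ₗ[F] F := LinearMap.proj i

variable (F) in
def formA : (Fin 5 → F) →ₗ[F] F := 2 • coord 0 - coord 1 + coord 2 + coord 3 + coord 4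

variable (F) in
def formB : (Fin 5 → F) →ₗ[F] F := coord 0 + coord 1

variable (F) in
def formC : (Fin 5 → F) →ₗ[F] F := coord 2 - coord 4

variable (F) in
def formD : (Fin 5 → F) →ₗ[F] F := coord 3 - coord 4

theorem aeval_tangentConeQuadric (w : Fin 5 → F) :
    aeval w tangentConeQuadric = 3 * (formA F w * formB F w -
      (formC F w ^ 2 - formC F w * formD F w + formD F w ^ 2)) := by
  simp [tangentConeQuadric_eq, nodeQuadraticTerm, formA, formB, formC, formD]

-- The four forms vanish exactly on the multiples of the vertex `(-1, 1, 1, 1, 1)`, where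
-- `coord 1` does not.
theorem eq_zero_of_forms_eq_zero (h3 : (3 : F) ≠ 0) (w : Fin 5 → F)
    (hA : formA F w = 0) (hB : formB F w = 0) (hC : formC F w = 0) (hD : formD F w = 0)
    (h1 : coord 1 w = 0) : w = 0 := by
  simp only [formA, formB, formC, formD, LinearMap.add_apply, LinearMap.sub_apply,
    LinearMap.smul_apply, LinearMap.coe_proj, Function.eval, nsmul_eq_mul, Nat.cast_ofNat]
    at hA hB hC hD h1
  have h4 : w 4 = 0 := (mul_eq_zero.mp (by linear_combination hA - 2 * hB - hC - hD + 3 * h1 :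
    (3 : F) * w 4 = 0)).resolve_left h3
  funext i
  fin_cases i
  all_goals simp only [Fin.zero_eta, Fin.mk_one, Fin.reduceFinMk, Fin.isValue, Pi.zero_apply]
  · linear_combination hB - h1
  · exact h1
  · linear_combination hC + h4
  · linear_combination hD + h4
  · exact h4

theorem formA_mul_formB_eq_of_aeval_eq_zero (h3 : (3 : F) ≠ 0) {w : Fin 5 → F}
    (hw : aeval w tangentConeQuadric = 0) :
    formA F w * formB F w = formC F w ^ 2 - formC F w * formD F w + formD F w ^ 2 := by
  rw [aeval_tangentConeQuadric, mul_eq_zero, or_iff_right h3] at hw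
  exact sub_eq_zero.mp hw

end TangentCone

open TangentCone

/-- The point `(-1:1:1:1:1)` is a node of the Burkhardt quartic: `f` and all five partial
derivatives vanish there.  Moreover, over a finite field `F_q` with `q ≡ 2 (mod 3)`, the
tangent cone quadric at this node is non-split: it contains no `3`-dimensional totally
isotropic linear subspace (equivalently, the ruling lines of the quadric cone are not
defined over `F_q`). -/
theorem node_and_nonsplit_tangent_cone :
    (MvPolynomial.eval nodePt burkhardtPoly = 0 ∧
      ∀ i : Fin 5, MvPolynomial.eval nodePt (pderiv i burkhardtPoly) = 0) ∧
    (∀ (F : Type) [Field F] [Fintype F], Fintype.card F % 3 = 2 →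
      ¬ ∃ W : Submodule F (Fin 5 → F), Module.finrank F W = 3 ∧
          ∀ w ∈ W, MvPolynomial.aeval w tangentConeQuadric = (0 : F)) := by
  refine ⟨⟨burkhardtPoly_eval_nodePt, burkhardtPoly_pderiv_eval_nodePt⟩, ?_⟩
  rintro F _ _ hcard ⟨W, hW, hWQ⟩
  have h3 := three_ne_zero_of_card_mod_three hcard
  have := finrank_le_two_of_isotropic (formA F) (formB F) (formC F) (formD F) (coord 1)
    (sq_sub_mul_add_sq_eq_zero_iff (sq_add_add_one_ne_zero_of_card_mod_three hcard))
    (eq_zero_of_forms_eq_zero h3)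
    (fun w hw => formA_mul_formB_eq_of_aeval_eq_zero h3 (hWQ w hw))
  omega
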